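/- arXiv:1010.5223 — 3 statements merged into one kernel-verified Lean document; each statement's English description precedes it below -/
import Mathlib

section
/- Suppose y has likelihood N(y; β, σ²) with σ > 0, and β has a prior probability density g on ℝ such that ∫_ℝ |β| N(y; β, σ²) g(β) dβ < ∞ for every y ∈ ℝ. Then the marginal m(y) = ∫_ℝ N(y; β, σ²) g(β) dβ is differentiable in y, and at every y with m(y) > 0 the posterior mean satisfies E(β | y) := m(y)^{−1} ∫_ℝ β N(y; β, σ²) g(β) dβ = y + σ² (d/dy) log m(y). -/
/-!
Differentiate under the integral sign, using `∂_y N(y; β, v) = (β - y) / v · N(y; β, v)`.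
For `|y - y₀| < 1` we have `N(y; β, v) ≤ e^{2/v} (N(y₀ + 1; β, v) + N(y₀ - 1; β, v))`, so the
moment hypothesis at the two means `y₀ ± 1` supplies an integrable dominating function. Thus
`m'(y) = (∫ β N g - y m(y)) / σ²`, and dividing by `m(y)` gives the formula, as `(log m)' = m' / m`.
-/

open MeasureTheory Set

/-- The normal density with mean `μ` and variance `v`. -/
noncomputable def normPdf (y μ v : ℝ) : ℝ :=
  (2 * Real.pi * v) ^ (-(1 : ℝ) / 2) * Real.exp (-((y - μ) ^ 2) / (2 * v))

/-- The marginal `m(y) = ∫ N(y; β, σ²) g(β) dβ`. -/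
noncomputable def marg (σ : ℝ) (g : ℝ → ℝ) (y : ℝ) : ℝ :=
  ∫ β : ℝ, normPdf y β (σ ^ 2) * g β

open Real Metric

lemma continuous_normPdf_snd (y v : ℝ) : Continuous fun β => normPdf y β v := by
  unfold normPdf
  fun_prop

lemma hasDerivAt_normPdf (β v y : ℝ) :
    HasDerivAt (fun t => normPdf t β v) ((β - y) / v * normPdf y β v) y := by
  have hexponent : HasDerivAt (fun t => -((t - β) ^ 2) / (2 * v)) ((β - y) / v) y := by
    refine (((((hasDerivAt_id y).sub_const β).pow 2).neg).div_const (2 * v)).congr_deriv ?_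
    simp only [id]
    ring
  exact (hexponent.exp.const_mul _).congr_deriv (by unfold normPdf; ring)

section NormPdf

variable {v : ℝ}

lemma normPdf_nonneg (hv : 0 ≤ v) (y β : ℝ) : 0 ≤ normPdf y β v := by
  unfold normPdf
  positivity

lemma normPdf_le (hv : 0 ≤ v) (y β : ℝ) : normPdf y β v ≤ (2 * π * v) ^ (-(1 : ℝ) / 2) := by
  unfold normPdf
  refine mul_le_of_le_one_right (by positivity) (exp_le_one_iff.mpr ?_)
  exact div_nonpos_of_nonpos_of_nonneg (neg_nonpos.mpr (sq_nonneg _)) (by positivity)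

lemma normPdf_le_exp_mul_normPdf (hv : 0 < v) {y y' β : ℝ}
    (h : (y' - β) ^ 2 ≤ (y - β) ^ 2 + 4) : normPdf y β v ≤ exp (2 / v) * normPdf y' β v := by
  unfold normPdf
  rw [mul_left_comm, ← exp_add]
  gcongr
  rw [show 2 / v = 4 / (2 * v) by field_simp; ring, ← add_div]
  gcongr
  linarith

-- The endpoint `y₀ ± 1` on the same side of `y₀` as `β` satisfies `(y₀ ± 1 - β)² ≤ (y - β)² + 4`.
lemma normPdf_le_exp_mul_add (hv : 0 < v) {y₀ y : ℝ} (hy : |y - y₀| < 1) (β : ℝ) :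
    normPdf y β v ≤ exp (2 / v) * (normPdf (y₀ + 1) β v + normPdf (y₀ - 1) β v) := by
  obtain ⟨hlo, hhi⟩ := abs_lt.mp hy
  rcases le_total y₀ β with hβ | hβ
  · calc normPdf y β v ≤ exp (2 / v) * normPdf (y₀ + 1) β v :=
          normPdf_le_exp_mul_normPdf hv (by nlinarith)
      _ ≤ _ := by gcongr; exact le_add_of_nonneg_right (normPdf_nonneg hv.le _ _)
  · calc normPdf y β v ≤ exp (2 / v) * normPdf (y₀ - 1) β v :=
          normPdf_le_exp_mul_normPdf hv (by nlinarith)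
      _ ≤ _ := by gcongr; exact le_add_of_nonneg_left (normPdf_nonneg hv.le _ _)

lemma abs_sub_div_mul_normPdf_le (hv : 0 < v) {y₀ y : ℝ} (hy : |y - y₀| < 1) (β : ℝ) :
    |(β - y) / v * normPdf y β v| ≤
      exp (2 / v) / v * ((|β| + (|y₀| + 1)) * (normPdf (y₀ + 1) β v + normPdf (y₀ - 1) β v)) := by
  have hβy : |β - y| ≤ |β| + (|y₀| + 1) := by
    linarith [abs_sub_abs_le_abs_sub y y₀, abs_sub β y]
  rw [abs_mul, abs_div, abs_of_pos hv, abs_of_nonneg (normPdf_nonneg hv.le _ _)]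
  calc |β - y| / v * normPdf y β v
      ≤ (|β| + (|y₀| + 1)) / v * (exp (2 / v) * (normPdf (y₀ + 1) β v + normPdf (y₀ - 1) β v)) := by
        gcongr
        · exact normPdf_nonneg hv.le _ _
        · exact normPdf_le_exp_mul_add hv hy β
    _ = _ := by ring

end NormPdf

section Marginal

variable {v : ℝ} {g : ℝ → ℝ}

lemma integrable_normPdf_mul (hv : 0 ≤ v) (hg : Integrable g) (y : ℝ) :
    Integrable fun β => normPdf y β v * g β :=
  hg.bdd_mul (continuous_normPdf_snd y v).aestronglyMeasurable
    (.of_forall fun β => by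
      rw [norm_of_nonneg (normPdf_nonneg hv y β)]
      exact normPdf_le hv y β)

lemma integrable_mul_normPdf_mul (hv : 0 ≤ v) (hg : Integrable g) {y : ℝ}
    (hint : Integrable fun β => |β| * (normPdf y β v * g β)) :
    Integrable fun β => β * (normPdf y β v * g β) :=
  hint.mono (continuous_id.aestronglyMeasurable.mul (integrable_normPdf_mul hv hg y).1)
    (.of_forall fun β => by simp only [norm_mul, norm_abs_eq_norm, le_refl])

theorem hasDerivAt_integral_normPdf_mul (hv : 0 < v) (hg : Integrable g)
    (hint : ∀ y, Integrable fun β => |β| * (normPdf y β v * g β)) (y₀ : ℝ) :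
    HasDerivAt (fun y => ∫ β, normPdf y β v * g β)
      (∫ β, (β - y₀) / v * (normPdf y₀ β v * g β)) y₀ := by
  set bound := fun β => exp (2 / v) / v *
    ((|β| + (|y₀| + 1)) * (normPdf (y₀ + 1) β v + normPdf (y₀ - 1) β v)) * |g β|
  have hN := integrable_normPdf_mul hv.le hg
  have hbound_int : Integrable bound := by
    have hA := ((hint (y₀ + 1)).add (hint (y₀ - 1))).norm
    have hB := (((hN (y₀ + 1)).add (hN (y₀ - 1))).norm).const_mul (|y₀| + 1)
    refine ((hA.add hB).const_mul (exp (2 / v) / v)).congr (.of_forall fun β => ?_)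
    have hsum := add_nonneg (normPdf_nonneg hv.le (y₀ + 1) β) (normPdf_nonneg hv.le (y₀ - 1) β)
    simp only [bound, Pi.add_apply, Real.norm_eq_abs, ← mul_add, ← add_mul, abs_mul, abs_abs,
      abs_of_nonneg hsum]
    ring
  have hbound : ∀ᵐ β, ∀ y ∈ ball y₀ 1, ‖(β - y) / v * (normPdf y β v * g β)‖ ≤ bound β :=
    .of_forall fun β y hy => by
      rw [mem_ball, Real.dist_eq] at hy
      rw [← mul_assoc, norm_mul, Real.norm_eq_abs, Real.norm_eq_abs]
      exact mul_le_mul_of_nonneg_right (abs_sub_div_mul_normPdf_le hv hy β) (abs_nonneg _)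
  have hderiv : ∀ᵐ β, ∀ y ∈ ball y₀ 1, HasDerivAt (fun t => normPdf t β v * g β)
      ((β - y) / v * (normPdf y β v * g β)) y :=
    .of_forall fun β y _ =>
      ((hasDerivAt_normPdf β v y).mul_const (g β)).congr_deriv (mul_assoc _ _ _)
  have hderiv_meas : AEStronglyMeasurable fun β => (β - y₀) / v * (normPdf y₀ β v * g β) :=
    ((continuous_id.sub continuous_const).div_const v).aestronglyMeasurable.mul (hN y₀).1
  exact (hasDerivAt_integral_of_dominated_loc_of_deriv_le (ball_mem_nhds y₀ one_pos)
    (.of_forall fun y => (hN y).1) (hN y₀) hderiv_meas hbound hbound_int hderiv).2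

end Marginal

lemma integral_sub_div_mul {f : ℝ → ℝ} (hf : Integrable f) (hxf : Integrable fun β => β * f β)
    (y v : ℝ) : ∫ β, (β - y) / v * f β = ((∫ β, β * f β) - y * ∫ β, f β) / v := by
  have hsplit : (fun β => (β - y) / v * f β) = fun β => v⁻¹ * (β * f β - y * f β) := by
    ext β
    ring
  rw [hsplit, integral_const_mul, integral_sub hxf (hf.const_mul y), integral_const_mul]
  ring

theorem posterior_mean_score_representation_general
    (σ : ℝ) (hσ : 0 < σ)
    (g : ℝ → ℝ)
    (hg_prob : ∫ β : ℝ, g β = 1)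
    (hint : ∀ y : ℝ, Integrable (fun β : ℝ => |β| * (normPdf y β (σ ^ 2) * g β))) :
    Differentiable ℝ (marg σ g) ∧
      ∀ y : ℝ, 0 < marg σ g y →
        (∫ β : ℝ, β * (normPdf y β (σ ^ 2) * g β)) / marg σ g y =
          y + σ ^ 2 * deriv (fun t : ℝ => Real.log (marg σ g t)) y := by
  have hv : 0 < σ ^ 2 := by positivity
  have hg : Integrable g := .of_integral_ne_zero (by rw [hg_prob]; exact one_ne_zero)
  have hmarg : ∀ y, HasDerivAt (marg σ g)
      (∫ β, (β - y) / σ ^ 2 * (normPdf y β (σ ^ 2) * g β)) y :=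
    hasDerivAt_integral_normPdf_mul hv hg hint
  refine ⟨fun y => (hmarg y).differentiableAt, fun y hm => ?_⟩
  rw [((hmarg y).log hm.ne').deriv, integral_sub_div_mul (integrable_normPdf_mul hv.le hg y)
    (integrable_mul_normPdf_mul hv.le hg (hint y))]
  unfold marg at hm ⊢
  field_simp
  ring

theorem posterior_mean_score_representation
    (σ : ℝ) (hσ : 0 < σ)
    (g : ℝ → ℝ) (hg_meas : Measurable g) (hg_nonneg : ∀ β : ℝ, 0 ≤ g β)
    (hg_prob : ∫ β : ℝ, g β = 1)
    (hint : ∀ y : ℝ, Integrable (fun β : ℝ => |β| * (normPdf y β (σ ^ 2) * g β))) :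
    Differentiable ℝ (marg σ g) ∧
      ∀ y : ℝ, 0 < marg σ g y →
        (∫ β : ℝ, β * (normPdf y β (σ ^ 2) * g β)) / marg σ g y =
          y + σ ^ 2 * deriv (fun t : ℝ => Real.log (marg σ g t)) y :=
  posterior_mean_score_representation_general σ hσ g hg_prob hint
end

section
/- For all a, b, τ > 0 with |1 − 1/τ²| < 1 and every s ∈ ℝ, the normalizing constant of the hypergeometric-beta density satisfies C(a,b,τ,s) = e^{−s} B(a,b) Φ₁(b, 1; a+b; s, 1 − 1/τ²). -/
open MeasureTheory Set

/-- The unnormalized hypergeometric-beta kernel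
`κ^{a−1} (1−κ)^{b−1} {1/τ² + (1 − 1/τ²)κ}^{−1} e^{−sκ}`. -/
noncomputable def hbKer (a b τ s κ : ℝ) : ℝ :=
  κ ^ (a - 1) * (1 - κ) ^ (b - 1) * (1 / τ ^ 2 + (1 - 1 / τ ^ 2) * κ)⁻¹ *
    Real.exp (-(s * κ))

/-- The normalizing constant `C(a,b,τ,s)`. -/
noncomputable def hbC (a b τ s : ℝ) : ℝ :=
  ∫ κ in Set.Ioo (0 : ℝ) 1, hbKer a b τ s κ

/-- The hypergeometric-beta density `π_{a,b,τ,s}` on `(0,1)`. -/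
noncomputable def hbPdf (a b τ s κ : ℝ) : ℝ :=
  (hbC a b τ s)⁻¹ * hbKer a b τ s κ

/-- The rising factorial `(q)_k = q (q+1) ⋯ (q+k−1)`. -/
noncomputable def risingFac (q : ℝ) (k : ℕ) : ℝ :=
  ∏ i ∈ Finset.range k, (q + (i : ℝ))

/-- The degenerate (Humbert) hypergeometric function of two variables
`Φ₁(α, β; γ; x, y) = Σ_{m,n≥0} [(α)_{m+n} (β)_n / ((γ)_{m+n} m! n!)] x^m y^n`. -/
noncomputable def Phi1 (α β γ x y : ℝ) : ℝ :=
  ∑' p : ℕ × ℕ,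
    risingFac α (p.1 + p.2) * risingFac β p.2 /
      (risingFac γ (p.1 + p.2) * (Nat.factorial p.1) * (Nat.factorial p.2)) *
      x ^ p.1 * y ^ p.2

/-- The Euler beta function `B(a,b) = Γ(a)Γ(b)/Γ(a+b)`. -/
noncomputable def betaFn (a b : ℝ) : ℝ :=
  Real.Gamma a * Real.Gamma b / Real.Gamma (a + b)

/-!
Write `y = 1 − 1/τ²` and `t = 1 − κ`. Then `{1/τ² + yκ}⁻¹ = (1 − yt)⁻¹` and
`e^{−sκ} = e^{−s} e^{st}`, and for `|y| < 1` the product `e^{st} (1 − yt)⁻¹` expands into the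
absolutely convergent double series `Σ_{m,n} s^m y^n t^{m+n} / m!`. Integrating term by term
against `κ^{a−1} t^{b−1}` turns the `(m,n)` term into `B(a, b+m+n) = B(a,b) (b)_{m+n} / (a+b)_{m+n}`,
and since `(1)_n = n!` this is the `(m,n)` term of `B(a,b) Φ₁(b, 1; a+b; s, y)`. Dominated
convergence applies because `B(a, b+k) ≤ B(a,b)`.
-/

lemma risingFac_succ (q : ℝ) (n : ℕ) : risingFac q (n + 1) = risingFac q n * (q + n) :=
  Finset.prod_range_succ _ _

lemma risingFac_pos {q : ℝ} (hq : 0 < q) (n : ℕ) : 0 < risingFac q n :=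
  Finset.prod_pos fun _ _ => by positivity

lemma risingFac_one (n : ℕ) : risingFac 1 n = n.factorial := by
  induction n with
  | zero => simp [risingFac]
  | succ n ih => rw [risingFac_succ, ih, Nat.factorial_succ]; push_cast; ring

lemma risingFac_mono {q r : ℝ} (hq : 0 < q) (hqr : q ≤ r) (n : ℕ) :
    risingFac q n ≤ risingFac r n :=
  Finset.prod_le_prod (fun _ _ => by positivity) fun _ _ => by linarith

lemma Gamma_add_nat_eq_risingFac_mul {x : ℝ} (hx : 0 < x) (n : ℕ) :
    Real.Gamma (x + n) = risingFac x n * Real.Gamma x := by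
  induction n with
  | zero => simp [risingFac]
  | succ n ih =>
    rw [Nat.cast_succ, ← add_assoc, Real.Gamma_add_one (by positivity), ih, risingFac_succ]
    ring

section Beta

variable {a b : ℝ}

lemma betaFn_pos (ha : 0 < a) (hb : 0 < b) : 0 < betaFn a b :=
  ProbabilityTheory.beta_pos ha hb

lemma betaFn_add_nat (hb : 0 < b) (hab : 0 < a + b) (n : ℕ) :
    betaFn a (b + n) = betaFn a b * (risingFac b n / risingFac (a + b) n) := by
  have hΓ := (Real.Gamma_pos_of_pos hab).ne'
  have hrf := (risingFac_pos hab n).ne'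
  rw [betaFn, betaFn, ← add_assoc, Gamma_add_nat_eq_risingFac_mul hb,
    Gamma_add_nat_eq_risingFac_mul hab]
  field_simp

lemma betaFn_add_nat_le (ha : 0 < a) (hb : 0 < b) (n : ℕ) : betaFn a (b + n) ≤ betaFn a b := by
  have hab : 0 < a + b := add_pos ha hb
  rw [betaFn_add_nat hb hab]
  refine mul_le_of_le_one_right (betaFn_pos ha hb).le ?_
  exact div_le_one_of_le₀ (risingFac_mono hb (by linarith) n) (risingFac_pos hab n).le

lemma Complex.betaIntegral_ofReal (a b : ℝ) :
    Complex.betaIntegral a b = ↑(∫ x in (0 : ℝ)..1, x ^ (a - 1) * (1 - x) ^ (b - 1)) := by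
  rw [Complex.betaIntegral, ← intervalIntegral.integral_ofReal]
  refine intervalIntegral.integral_congr fun x hx => ?_
  rw [uIcc_of_le zero_le_one] at hx
  simp only [Complex.ofReal_mul, Complex.ofReal_cpow hx.1,
    Complex.ofReal_cpow (sub_nonneg.2 hx.2)]
  push_cast
  ring_nf

lemma integral_rpow_mul_one_sub_rpow (ha : 0 < a) (hb : 0 < b) :
    ∫ x in Ioo (0 : ℝ) 1, x ^ (a - 1) * (1 - x) ^ (b - 1) = betaFn a b := by
  rw [← integral_Ioc_eq_integral_Ioo, ← intervalIntegral.integral_of_le zero_le_one,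
    ← Complex.ofReal_re (∫ x in (0 : ℝ)..1, _), ← Complex.betaIntegral_ofReal]
  exact (ProbabilityTheory.beta_eq_betaIntegralReal a b ha hb).symm

lemma integrableOn_rpow_mul_one_sub_rpow (ha : 0 < a) (hb : 0 < b) :
    IntegrableOn (fun x : ℝ => x ^ (a - 1) * (1 - x) ^ (b - 1)) (Ioo 0 1) :=
  Integrable.of_integral_ne_zero <| by
    rw [integral_rpow_mul_one_sub_rpow ha hb]; exact (betaFn_pos ha hb).ne'

lemma integral_tsum_mul_rpow_mul_one_sub_rpow {ι : Type*} [Countable ι] (ha : 0 < a)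
    (hb : 0 < b) {c : ι → ℝ} (hc : Summable fun i => ‖c i‖) (k : ι → ℕ) :
    ∫ x in Ioo (0 : ℝ) 1, ∑' i, c i * (x ^ (a - 1) * (1 - x) ^ (b + k i - 1)) =
      ∑' i, c i * betaFn a (b + k i) := by
  have hbk (i : ι) : 0 < b + k i := by positivity
  have hint (i : ι) := (integrableOn_rpow_mul_one_sub_rpow ha (hbk i)).const_mul (c i)
  have hnorm (i : ι) : ∫ x in Ioo (0 : ℝ) 1, ‖c i * (x ^ (a - 1) * (1 - x) ^ (b + k i - 1))‖ =
      ‖c i‖ * betaFn a (b + k i) := by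
    rw [← integral_rpow_mul_one_sub_rpow ha (hbk i), ← integral_const_mul]
    refine setIntegral_congr_fun measurableSet_Ioo fun x hx => ?_
    rw [norm_mul, Real.norm_of_nonneg (mul_nonneg (Real.rpow_nonneg hx.1.le _)
      (Real.rpow_nonneg (sub_nonneg.2 hx.2.le) _))]
  have hsum : Summable fun i => ‖c i‖ * betaFn a (b + k i) :=
    (hc.mul_right (betaFn a b)).of_nonneg_of_le
      (fun i => mul_nonneg (norm_nonneg _) (betaFn_pos ha (hbk i)).le)
      fun i => mul_le_mul_of_nonneg_left (betaFn_add_nat_le ha hb _) (norm_nonneg _)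
  rw [← integral_tsum_of_summable_integral_norm hint (by simpa only [hnorm] using hsum)]
  exact tsum_congr fun i => by rw [integral_const_mul, integral_rpow_mul_one_sub_rpow ha (hbk i)]

end Beta

/-- The coefficients of `e^{st} (1 − yt)⁻¹ = Σ_{m,n} expGeomCoeff s y (m, n) t^{m+n}`. -/
noncomputable def expGeomCoeff (s y : ℝ) (p : ℕ × ℕ) : ℝ :=
  s ^ p.1 / p.1.factorial * y ^ p.2

lemma summable_norm_expGeomCoeff (s : ℝ) {y : ℝ} (hy : ‖y‖ < 1) :
    Summable fun p => ‖expGeomCoeff s y p‖ :=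
  (Real.summable_pow_div_factorial s).norm.mul_norm (summable_norm_geometric_of_norm_lt_one hy)

lemma tsum_expGeomCoeff (s : ℝ) {y : ℝ} (hy : ‖y‖ < 1) :
    ∑' p, expGeomCoeff s y p = Real.exp s * (1 - y)⁻¹ := by
  rw [← tsum_geometric_of_norm_lt_one hy, Real.exp_eq_exp_ℝ, NormedSpace.exp_eq_tsum_div,
    tsum_mul_tsum_of_summable_norm (Real.summable_pow_div_factorial s).norm
      (summable_norm_geometric_of_norm_lt_one hy)]
  rfl

lemma expGeomCoeff_mul (s y t : ℝ) (p : ℕ × ℕ) :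
    expGeomCoeff (s * t) (y * t) p = expGeomCoeff s y p * t ^ (p.1 + p.2) := by
  simp only [expGeomCoeff, mul_pow, pow_add]
  ring

lemma hbKer_eq_tsum (a b τ s : ℝ) (hτ : |1 - 1 / τ ^ 2| < 1) {κ : ℝ} (hκ : κ ∈ Ioo 0 1) :
    hbKer a b τ s κ = Real.exp (-s) * ∑' p, expGeomCoeff s (1 - 1 / τ ^ 2) p *
      (κ ^ (a - 1) * (1 - κ) ^ (b + ((p.1 + p.2 : ℕ) : ℝ) - 1)) := by
  set y := 1 - 1 / τ ^ 2 with hy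
  have ht : 0 < 1 - κ := sub_pos.2 hκ.2
  have hyt : ‖y * (1 - κ)‖ < 1 := by
    rw [norm_mul, Real.norm_of_nonneg ht.le, Real.norm_eq_abs]
    nlinarith [abs_nonneg y, hκ.1]
  have hexpand := tsum_expGeomCoeff (s * (1 - κ)) hyt
  simp only [expGeomCoeff_mul] at hexpand
  have hrpow (k : ℕ) : (1 - κ) ^ (b + (k : ℝ) - 1) = (1 - κ) ^ (b - 1) * (1 - κ) ^ k := by
    rw [add_sub_right_comm, Real.rpow_add ht, Real.rpow_natCast]
  have hexp : Real.exp (-(s * κ)) = Real.exp (-s) * Real.exp (s * (1 - κ)) := by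
    rw [← Real.exp_add]; ring_nf
  have hden : 1 / τ ^ 2 + y * κ = 1 - y * (1 - κ) := by rw [hy]; ring
  calc hbKer a b τ s κ
      = Real.exp (-s) * (κ ^ (a - 1) * (1 - κ) ^ (b - 1) *
          (Real.exp (s * (1 - κ)) * (1 - y * (1 - κ))⁻¹)) := by
        rw [hbKer, hden, hexp]
        ring
    _ = _ := by
        rw [← hexpand, ← tsum_mul_left]
        simp only [hrpow]
        congr 1
        exact tsum_congr fun p => by ring

lemma expGeomCoeff_mul_betaFn {a b : ℝ} (hb : 0 < b) (hab : 0 < a + b) (s y : ℝ) (p : ℕ × ℕ) :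
    expGeomCoeff s y p * betaFn a (b + ((p.1 + p.2 : ℕ) : ℝ)) =
      betaFn a b * (risingFac b (p.1 + p.2) * risingFac 1 p.2 /
        (risingFac (a + b) (p.1 + p.2) * p.1.factorial * p.2.factorial) * s ^ p.1 * y ^ p.2) := by
  have := (risingFac_pos hab (p.1 + p.2)).ne'
  rw [betaFn_add_nat hb hab, risingFac_one, expGeomCoeff]
  field_simp

theorem hb_normalizing_constant_general (a b τ s : ℝ) (ha : 0 < a) (hb : 0 < b)
    (hτ' : |1 - 1 / τ ^ 2| < 1) :
    hbC a b τ s = Real.exp (-s) * betaFn a b * Phi1 b 1 (a + b) s (1 - 1 / τ ^ 2) := by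
  have hy : ‖1 - 1 / τ ^ 2‖ < 1 := hτ'
  calc hbC a b τ s
      = ∫ κ in Ioo (0 : ℝ) 1, Real.exp (-s) * ∑' p, expGeomCoeff s (1 - 1 / τ ^ 2) p *
          (κ ^ (a - 1) * (1 - κ) ^ (b + ((p.1 + p.2 : ℕ) : ℝ) - 1)) :=
        setIntegral_congr_fun measurableSet_Ioo fun κ => hbKer_eq_tsum a b τ s hτ'
    _ = Real.exp (-s) *
          ∑' p, expGeomCoeff s (1 - 1 / τ ^ 2) p * betaFn a (b + ((p.1 + p.2 : ℕ) : ℝ)) := by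
        rw [integral_const_mul, integral_tsum_mul_rpow_mul_one_sub_rpow ha hb
          (summable_norm_expGeomCoeff s hy)]
    _ = _ := by
        simp only [expGeomCoeff_mul_betaFn hb (add_pos ha hb), tsum_mul_left, Phi1, mul_assoc]

theorem hb_normalizing_constant (a b τ s : ℝ) (ha : 0 < a) (hb : 0 < b) (hτ : 0 < τ)
    (hτ' : |1 - 1 / τ ^ 2| < 1) :
    hbC a b τ s = Real.exp (-s) * betaFn a b * Phi1 b 1 (a + b) s (1 - 1 / τ ^ 2) :=
  hb_normalizing_constant_general a b τ s ha hb hτ'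
end

section
/- Let τ > 0. If λ is a random variable on (0,∞) with the half-Cauchy density 2τ/(π(τ² + λ²)), then κ = 1/(1 + λ²) has density (πτ)^{−1} κ^{−1/2} (1−κ)^{−1/2} {1/τ² + (1 − 1/τ²)κ}^{−1} on (0,1); that is, κ has the hypergeometric-beta density π_{1/2, 1/2, τ, 0}, and in particular C(1/2, 1/2, τ, 0) = πτ. -/
open MeasureTheory Set

/-! The map `g λ = 1 / (1 + λ²)` sends `(0, ∞)` injectively onto `(0, 1)` with
`|g' λ| = 2λ / (1 + λ²)²`, so by the one-dimensional change of variables the image of a density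
`p` on `(0, ∞)` has density `q` on `(0, 1)` as soon as `|g'| · (q ∘ g) = p`. With
`κ = g λ` one has `κ^{-1/2} = √(1 + λ²)` and `(1 - κ)^{-1/2} = √(1 + λ²) / λ`, and this identity
for the half-Cauchy density `p` and `q = (πτ)⁻¹ · hbKer (1/2) (1/2) τ 0` is a direct computation.
The image of the half-Cauchy law is again a probability measure, so `q` integrates to one on
`(0, 1)`, i.e. `C(1/2, 1/2, τ, 0) = πτ`. -/

open Real

theorem map_withDensity_ofReal_indicator {s : Set ℝ} {f f' p q : ℝ → ℝ}
    (hs : MeasurableSet s) (hf : Measurable f)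
    (hf' : ∀ x ∈ s, HasDerivWithinAt f (f' x) s x) (hinj : InjOn f s)
    (hpq : ∀ x ∈ s, |f' x| * q (f x) = p x) :
    Measure.map f (volume.withDensity fun x => ENNReal.ofReal (s.indicator p x)) =
      volume.withDensity fun y => ENNReal.ofReal ((f '' s).indicator q y) := by
  have hfs : MeasurableSet (f '' s) :=
    measurable_image_of_fderivWithin hs (fun x hx => (hf' x hx).hasFDerivWithinAt) hinj
  have hind : ∀ (u : Set ℝ) (g : ℝ → ℝ),
      (fun x => ENNReal.ofReal (u.indicator g x)) = u.indicator fun x => ENNReal.ofReal (g x) :=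
    fun u g => (indicator_comp_of_zero ENNReal.ofReal_zero).symm
  ext t ht
  rw [Measure.map_apply hf ht, hind, hind, withDensity_apply _ (hf ht), withDensity_apply _ ht,
    lintegral_indicator hs, lintegral_indicator hfs, Measure.restrict_restrict hs,
    Measure.restrict_restrict hfs, ← image_inter_preimage,
    lintegral_image_eq_lintegral_abs_deriv_mul (hs.inter (hf ht))
      (fun x hx => (hf' x hx.1).mono inter_subset_left) (hinj.mono inter_subset_left)]
  refine setLIntegral_congr_fun (hs.inter (hf ht)) fun x hx => ?_
  rw [← ENNReal.ofReal_mul (abs_nonneg _), hpq x hx.1]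

theorem hasDerivAt_one_div_one_add_sq (l : ℝ) :
    HasDerivAt (fun l : ℝ => 1 / (1 + l ^ 2)) (-(2 * l) / (1 + l ^ 2) ^ 2) l := by
  refine ((hasDerivAt_const l (1 : ℝ)).fun_div ((hasDerivAt_pow 2 l).const_add 1)
    (by positivity)).congr_deriv ?_
  ring

theorem strictAntiOn_one_div_one_add_sq :
    StrictAntiOn (fun l : ℝ => 1 / (1 + l ^ 2)) (Ici 0) := fun a ha b _ hab =>
  one_div_lt_one_div_of_lt (by positivity) (by gcongr)

theorem image_one_div_one_add_sq_Ioi :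
    (fun l : ℝ => 1 / (1 + l ^ 2)) '' Ioi 0 = Ioo 0 1 := by
  ext κ
  constructor
  · rintro ⟨l, hl, rfl⟩
    have hl2 : 0 < l ^ 2 := pow_pos hl 2
    exact ⟨by positivity, (div_lt_one (by positivity)).2 (by linarith)⟩
  · rintro ⟨hκ0, hκ1⟩
    have hpos : 0 < 1 / κ - 1 := by rw [sub_pos, lt_div_iff₀ hκ0]; linarith
    refine ⟨√(1 / κ - 1), sqrt_pos.2 hpos, ?_⟩
    simp only [sq_sqrt hpos.le]
    field_simp
    ring

theorem isProbabilityMeasure_halfCauchy {τ : ℝ} (hτ : 0 < τ) :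
    IsProbabilityMeasure (volume.withDensity fun l =>
      ENNReal.ofReal ((Ioi (0 : ℝ)).indicator (fun l => 2 * τ / (π * (τ ^ 2 + l ^ 2))) l)) := by
  have hscaled : (fun l : ℝ => 2 * τ / (π * (τ ^ 2 + l ^ 2))) =
      fun l => 2 / (π * τ) * (1 + (τ⁻¹ * l) ^ 2)⁻¹ := by
    funext l
    field_simp
  have hint : IntegrableOn (fun l : ℝ => 2 * τ / (π * (τ ^ 2 + l ^ 2))) (Ioi 0) := by
    rw [hscaled]
    exact ((integrableOn_Ioi_comp_mul_left_iff (fun u : ℝ => (1 + u ^ 2)⁻¹) 0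
      (inv_pos.2 hτ)).2 integrable_inv_one_add_sq.integrableOn).const_mul _
  have hval : ∫ l in Ioi (0 : ℝ), 2 * τ / (π * (τ ^ 2 + l ^ 2)) = 1 := by
    rw [hscaled, integral_const_mul,
      integral_comp_mul_left_Ioi (fun u : ℝ => (1 + u ^ 2)⁻¹) 0 (inv_pos.2 hτ)]
    simp only [mul_zero, integral_Ioi_inv_one_add_sq, arctan_zero, sub_zero, inv_inv,
      smul_eq_mul]
    field_simp
  constructor
  rw [withDensity_apply _ MeasurableSet.univ, Measure.restrict_univ,
    ← ofReal_integral_eq_lintegral_ofReal ((integrable_indicator_iff measurableSet_Ioi).2 hint)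
      (Filter.Eventually.of_forall fun l => indicator_nonneg (fun l _ => by positivity) l),
    integral_indicator measurableSet_Ioi, hval, ENNReal.ofReal_one]

theorem hbKer_pos (a b τ s : ℝ) {κ : ℝ} (hκ : κ ∈ Ioo 0 1) : 0 < hbKer a b τ s κ := by
  obtain ⟨hκ0, hκ1⟩ := hκ
  have hden : 0 < 1 / τ ^ 2 + (1 - 1 / τ ^ 2) * κ := by
    have : 0 ≤ (1 - κ) * (1 / τ ^ 2) := mul_nonneg (by linarith) (by positivity)
    linarith
  have hκpow := rpow_pos_of_pos hκ0 (a - 1)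
  have h1κpow := rpow_pos_of_pos (sub_pos.2 hκ1) (b - 1)
  unfold hbKer
  positivity

theorem hbC_eq_of_isProbabilityMeasure {a b τ s c : ℝ} (hc : 0 < c)
    [hprob : IsProbabilityMeasure (volume.withDensity fun κ =>
      ENNReal.ofReal ((Ioo (0 : ℝ) 1).indicator (fun κ => c⁻¹ * hbKer a b τ s κ) κ))] :
    hbC a b τ s = c := by
  have hmass := hprob.measure_univ
  rw [withDensity_apply _ MeasurableSet.univ, Measure.restrict_univ] at hmass
  have hnonneg : 0 ≤ (Ioo (0 : ℝ) 1).indicator (fun κ => c⁻¹ * hbKer a b τ s κ) :=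
    indicator_nonneg fun κ hκ => (mul_pos (inv_pos.2 hc) (hbKer_pos a b τ s hκ)).le
  have hmeas : Measurable ((Ioo (0 : ℝ) 1).indicator (fun κ => c⁻¹ * hbKer a b τ s κ)) :=
    Measurable.indicator (by unfold hbKer; fun_prop) measurableSet_Ioo
  calc hbC a b τ s = c * ∫ κ in Ioo (0 : ℝ) 1, c⁻¹ * hbKer a b τ s κ := by
        rw [hbC, integral_const_mul, mul_inv_cancel_left₀ hc.ne']
    _ = c := by
        rw [← integral_indicator measurableSet_Ioo,
          integral_eq_lintegral_of_nonneg_ae (Filter.Eventually.of_forall hnonneg)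
            hmeas.aestronglyMeasurable, hmass, ENNReal.toReal_one, mul_one]

theorem hbKer_half_half_zero (τ κ : ℝ) :
    hbKer (1 / 2) (1 / 2) τ 0 κ =
      κ ^ (-(1 : ℝ) / 2) * (1 - κ) ^ (-(1 : ℝ) / 2) * (1 / τ ^ 2 + (1 - 1 / τ ^ 2) * κ)⁻¹ := by
  norm_num [hbKer]

theorem rpow_neg_half_eq_inv_sqrt {x : ℝ} (hx : 0 ≤ x) : x ^ (-(1 : ℝ) / 2) = (√x)⁻¹ := by
  rw [neg_div, rpow_neg hx, ← sqrt_eq_rpow]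

theorem abs_deriv_one_div_one_add_sq_mul_hbKer {τ l : ℝ} (hτ : 0 < τ) (hl : 0 < l) :
    |-(2 * l) / (1 + l ^ 2) ^ 2| *
        ((π * τ)⁻¹ * hbKer (1 / 2) (1 / 2) τ 0 (1 / (1 + l ^ 2))) =
      2 * τ / (π * (τ ^ 2 + l ^ 2)) := by
  have h1 : 0 < 1 + l ^ 2 := by positivity
  have hc2 : √(1 + l ^ 2) ^ 2 = 1 + l ^ 2 := sq_sqrt h1.le
  have hκ : (1 / (1 + l ^ 2)) ^ (-(1 : ℝ) / 2) = √(1 + l ^ 2) := by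
    rw [rpow_neg_half_eq_inv_sqrt (by positivity), one_div, sqrt_inv, inv_inv]
  have hκc : (1 - 1 / (1 + l ^ 2)) ^ (-(1 : ℝ) / 2) = √(1 + l ^ 2) / l := by
    have : 1 - 1 / (1 + l ^ 2) = l ^ 2 / (1 + l ^ 2) := by field_simp; ring
    rw [this, rpow_neg_half_eq_inv_sqrt (by positivity), sqrt_div (by positivity),
      sqrt_sq hl.le, inv_div]
  have hden : 1 / τ ^ 2 + (1 - 1 / τ ^ 2) * (1 / (1 + l ^ 2)) =
      (τ ^ 2 + l ^ 2) / (τ ^ 2 * (1 + l ^ 2)) := by field_simp; ring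
  rw [hbKer_half_half_zero, hκ, hκc, hden, abs_div, abs_neg, abs_of_pos (by positivity),
    abs_of_pos (by positivity)]
  field_simp
  linear_combination hc2

theorem half_cauchy_to_hb (τ : ℝ) (hτ : 0 < τ) :
    Measure.map (fun l : ℝ => 1 / (1 + l ^ 2))
        (volume.withDensity fun l =>
          ENNReal.ofReal ((Set.Ioi (0 : ℝ)).indicator
            (fun l => 2 * τ / (Real.pi * (τ ^ 2 + l ^ 2))) l)) =
      volume.withDensity (fun κ =>
        ENNReal.ofReal ((Set.Ioo (0 : ℝ) 1).indicator
          (fun κ => (Real.pi * τ)⁻¹ * κ ^ (-(1 : ℝ) / 2) * (1 - κ) ^ (-(1 : ℝ) / 2) *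
            (1 / τ ^ 2 + (1 - 1 / τ ^ 2) * κ)⁻¹) κ)) ∧
    hbC (1 / 2) (1 / 2) τ 0 = Real.pi * τ := by
  have hdensity : (fun κ : ℝ => (π * τ)⁻¹ * κ ^ (-(1 : ℝ) / 2) * (1 - κ) ^ (-(1 : ℝ) / 2) *
      (1 / τ ^ 2 + (1 - 1 / τ ^ 2) * κ)⁻¹) =
      fun κ => (π * τ)⁻¹ * hbKer (1 / 2) (1 / 2) τ 0 κ := by
    funext κ
    rw [hbKer_half_half_zero]
    ring
  have hmeas : Measurable fun l : ℝ => 1 / (1 + l ^ 2) := by fun_prop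
  have hmap := map_withDensity_ofReal_indicator (p := fun l => 2 * τ / (π * (τ ^ 2 + l ^ 2)))
    (q := fun κ => (π * τ)⁻¹ * hbKer (1 / 2) (1 / 2) τ 0 κ) measurableSet_Ioi hmeas
    (fun l _ => (hasDerivAt_one_div_one_add_sq l).hasDerivWithinAt)
    (strictAntiOn_one_div_one_add_sq.injOn.mono Ioi_subset_Ici_self)
    (fun l hl => abs_deriv_one_div_one_add_sq_mul_hbKer hτ hl)
  rw [image_one_div_one_add_sq_Ioi] at hmap
  rw [hdensity]
  refine ⟨hmap, hbC_eq_of_isProbabilityMeasure (by positivity) (hprob := ?_)⟩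
  have := isProbabilityMeasure_halfCauchy hτ
  rw [← hmap]
  exact Measure.isProbabilityMeasure_map hmeas.aemeasurable
end
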